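/- arXiv:1801.06388 — 3 statements merged into one kernel-verified Lean document; each statement's English description precedes it below -/
import Mathlib

section
/- Every element h ∈ k((t_•)) can be written as a finite sum h = g + Σ_{j∈J} f_j · ∏_{d∈D_j} f_{d,j}, where J is a finite index set, g ∈ k[[t_•]], each D_j is a nonempty subset of D, each f_j lies in (the image in k((t_•)) of) the power series ring k[[t_{d'} : d' ∈ D \ D_j]], and each f_{d,j} is (the image in k((t_•)) of) a nonzero one-variable Laurent series in k[[t_d]][t_d^{-1}], i.e. a unit of k((t_d)). -/
noncomputable section
open MvPowerSeries Finsupp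
open scoped Classical

namespace St3Aux


variable {k : Type*} [Field k] {D : Type*} [Fintype D]

def toF {D : Type*} [Fintype D] (e : D → ℕ) : D →₀ ℕ := Finsupp.equivFunOnFinite.symm e

@[simp] lemma toF_apply {D : Type*} [Fintype D] (e : D → ℕ) (d : D) : toF e d = e d := rfl

def Idx (D : Type*) [Fintype D] (N : ℕ) : Type _ :=
  Σ S : {S : Finset D // S.Nonempty}, (↥(S : Finset D) → Fin N)

instance (D : Type*) [Fintype D] (N : ℕ) : Fintype (Idx D N) := by
  unfold Idx; infer_instance

variable {N : ℕ}

def Sj (j : Idx D N) : Finset D := j.1.1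

lemma Sj_nonempty (j : Idx D N) : (Sj j).Nonempty := j.1.2

def be (j : Idx D N) (d : D) : ℕ := if h : d ∈ Sj j then (j.2 ⟨d, h⟩ : ℕ) else 0

lemma be_lt {j : Idx D N} {d : D} (hd : d ∈ Sj j) : be j d < N := by
  rw [be, dif_pos hd]; exact (j.2 ⟨d, hd⟩).2

def mj (j : Idx D N) : D →₀ ℕ := toF (fun d => if d ∈ Sj j then be j d else N)

lemma mj_mem (j : Idx D N) {d : D} (hd : d ∈ Sj j) : (mj j) d = be j d := by
  simp only [mj, toF_apply, if_pos hd]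

lemma mj_not_mem (j : Idx D N) {d : D} (hd : d ∉ Sj j) : (mj j) d = N := by
  simp only [mj, toF_apply, if_neg hd]

def Nall (D : Type*) [Fintype D] (N : ℕ) : D →₀ ℕ := toF (fun _ => N)

def fS (N : ℕ) (f : MvPowerSeries D k) (j : Idx D N) : MvPowerSeries D k :=
  (fun γ : D →₀ ℕ => if ∀ d ∈ Sj j, γ d = 0
    then coeff (toF fun d => if d ∈ Sj j then be j d else γ d + N) f else 0 :
    (D →₀ ℕ) → k)

lemma coeff_fS (N : ℕ) (f : MvPowerSeries D k) (j : Idx D N) (γ : D →₀ ℕ) :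
    coeff γ (fS N f j) = if ∀ d ∈ Sj j, γ d = 0
      then coeff (toF fun d => if d ∈ Sj j then be j d else γ d + N) f else 0 := rfl

def gP (N : ℕ) (f : MvPowerSeries D k) : MvPowerSeries D k :=
  (fun γ : D →₀ ℕ => coeff (γ + Nall D N) f : (D →₀ ℕ) → k)

lemma coeff_gP (N : ℕ) (f : MvPowerSeries D k) (γ : D →₀ ℕ) :
    coeff γ (gP N f) = coeff (γ + Nall D N) f := rfl

lemma key (N : ℕ) (f : MvPowerSeries D k) :
    f = gP N f * monomial (Nall D N) 1 +
      ∑ j : Idx D N, fS N f j * monomial (mj j) 1 := by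
  ext α
  rw [map_add, coeff_mul_monomial, map_sum]
  by_cases hc : Nall D N ≤ α
  · rw [if_pos hc, coeff_gP, tsub_add_cancel_of_le hc, mul_one]
    have hz : ∀ j : Idx D N, coeff α (fS N f j * monomial (mj j) 1) = 0 := by
      intro j
      rw [coeff_mul_monomial]
      split_ifs with hle
      · rw [mul_one, coeff_fS, if_neg]
        intro hall
        obtain ⟨d0, hd0⟩ := Sj_nonempty j
        have h1 := hall d0 hd0
        rw [tsub_apply, mj_mem j hd0] at h1
        have h3 : N ≤ α d0 := hc d0
        have h4 := be_lt hd0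
        omega
      · rfl
    rw [Finset.sum_congr rfl (fun j _ => hz j), Finset.sum_const_zero, add_zero]
  · rw [if_neg hc, zero_add]
    have hex : ∃ d : D, α d < N := by
      by_contra hno
      push_neg at hno
      exact hc fun d => hno d
    set Sa : Finset D := Finset.univ.filter (fun d => α d < N) with hSa
    have hmem : ∀ d, d ∈ Sa ↔ α d < N := by intro d; simp [hSa]
    have hSane : Sa.Nonempty := by
      obtain ⟨d, hd⟩ := hex
      exact ⟨d, (hmem d).2 hd⟩
    set j0 : Idx D N := ⟨⟨Sa, hSane⟩, fun d => ⟨α d.1, (hmem d.1).1 d.2⟩⟩ with hj0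
    have hSj0 : Sj j0 = Sa := rfl
    have hbe0 : ∀ d ∈ Sa, be j0 d = α d := by
      intro d hd
      rw [be, dif_pos (by rw [hSj0]; exact hd)]
    rw [Fintype.sum_eq_single j0]
    · -- value at j0
      have hle : mj j0 ≤ α := by
        intro d
        by_cases hd : d ∈ Sj j0
        · rw [mj_mem j0 hd, hbe0 d (hSj0 ▸ hd)]
        · rw [mj_not_mem j0 hd]
          have : ¬ α d < N := by rw [hSj0, hmem] at hd; exact hd
          omega
      have hall : ∀ d ∈ Sj j0, (α - mj j0) d = 0 := by
        intro d hd
        rw [tsub_apply, mj_mem j0 hd, hbe0 d (hSj0 ▸ hd)]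
        omega
      rw [coeff_mul_monomial, if_pos hle, mul_one, coeff_fS, if_pos hall]
      have harg : (toF fun d => if d ∈ Sj j0 then be j0 d else (α - mj j0) d + N) = α := by
        ext d
        rw [toF_apply]
        by_cases hd : d ∈ Sj j0
        · rw [if_pos hd, hbe0 d (hSj0 ▸ hd)]
        · rw [if_neg hd, tsub_apply, mj_not_mem j0 hd]
          have : ¬ α d < N := by rw [hSj0, hmem] at hd; exact hd
          omega
      rw [harg]
    · -- other indices vanish
      intro j hj
      rw [coeff_mul_monomial]
      split_ifs with hle
      · rw [mul_one, coeff_fS, if_neg]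
        intro hall
        apply hj
        have hSeq : Sj j = Sa := by
          apply Finset.ext
          intro d
          rw [hmem]
          constructor
          · intro hd
            have h1 := hall d hd
            rw [tsub_apply, mj_mem j hd] at h1
            have h3 : (mj j) d ≤ α d := hle d
            rw [mj_mem j hd] at h3
            have h4 := be_lt hd
            omega
          · intro hd
            by_contra hnd
            have h3 : (mj j) d ≤ α d := hle d
            rw [mj_not_mem j hnd] at h3
            omega
        have hb : ∀ (d : D) (hd : d ∈ Sj j), (j.2 ⟨d, hd⟩ : ℕ) = α d := by
          intro d hd
          have h1 := hall d hd
          rw [tsub_apply, mj_mem j hd] at h1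
          have h3 : (mj j) d ≤ α d := hle d
          rw [mj_mem j hd] at h3
          have h4 : be j d = (j.2 ⟨d, hd⟩ : ℕ) := by rw [be, dif_pos hd]
          rw [h4] at h1 h3
          omega
        obtain ⟨⟨S, hS⟩, b⟩ := j
        have hSeq' : S = Sa := hSeq
        subst hSeq'
        have hbfun : b = fun d : ↥Sa => (⟨α d.1, (hmem d.1).1 d.2⟩ : Fin N) :=
          funext fun d => Fin.ext (hb d.1 d.2)
        rw [hj0, hbfun]
      · rfl


lemma sum_single_eq_toF (e : D → ℕ) : ∑ d : D, Finsupp.single d (e d) = toF e := by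
  ext d'
  rw [Finsupp.finset_sum_apply, toF_apply]
  rw [Finset.sum_eq_single d' (fun d _ hne => Finsupp.single_eq_of_ne' hne)
    (fun hd => absurd (Finset.mem_univ d') hd)]
  exact Finsupp.single_eq_same

lemma prod_X_pow (e : D → ℕ) :
    ∏ d : D, (X d : MvPowerSeries D k) ^ e d = monomial (toF e) 1 := by
  have h1 : ∀ s : Finset D, ∏ d ∈ s, (X d : MvPowerSeries D k) ^ e d
      = monomial (∑ d ∈ s, Finsupp.single d (e d)) 1 := by
    intro s
    induction s using Finset.induction with
    | empty => simp
    | insert _ _ hnot ih =>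
        rw [Finset.prod_insert hnot, Finset.sum_insert hnot, ih, X_pow_eq,
          monomial_mul_monomial, one_mul]
  rw [h1, sum_single_eq_toF]


end St3Aux

/-- The product `∏_{d ∈ D} t_d` of all the variables. -/
def Pprod (D : Type*) [Fintype D] (R : Type*) [CommRing R] : MvPowerSeries D R :=
  ∏ d : D, MvPowerSeries.X d

/-- `R((t_•))`: the localization of `R[[t_•]]` at (the powers of) the product of the
variables. -/
abbrev LaurentMv (D : Type*) [Fintype D] (R : Type*) [CommRing R] :=
  Localization.Away (Pprod D R)

/-- `f` involves only the variables in `S`, i.e. `f` lies in (the image in `k[[t_•]]` of)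
the power series ring `k[[t_d : d ∈ S]]`. -/
def OnlyVars {k : Type*} [CommRing k] {D : Type*} (S : Set D) (f : MvPowerSeries D k) :
    Prop :=
  ∀ α : D →₀ ℕ, (∃ d, d ∉ S ∧ α d ≠ 0) → MvPowerSeries.coeff α f = 0

/-- `x ∈ k((t_•))` is (the image of) a nonzero one-variable Laurent series in the
variable `t_d`, i.e. of a unit of `k((t_d))`: it equals `t_d^{b-a}·v` for a power series
`v` involving only the variable `t_d` and with nonzero constant coefficient. -/
def IsLaurentUnitIn {k : Type*} [Field k] {D : Type*} [Fintype D] (d : D)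
    (x : LaurentMv D k) : Prop :=
  ∃ (v : MvPowerSeries D k) (a b : ℕ),
    OnlyVars {d} v ∧ MvPowerSeries.constantCoeff v ≠ 0 ∧
    algebraMap (MvPowerSeries D k) (LaurentMv D k) (MvPowerSeries.X d ^ a) * x
      = algebraMap (MvPowerSeries D k) (LaurentMv D k) (MvPowerSeries.X d ^ b * v)

/-- formula (4) of the paper.  Every `h ∈ k((t_•))` may be written as
`h = g + ∑_{j ∈ J} f_j ∏_{d ∈ D_j} f_{d,j}` with `g ∈ k[[t_•]]`, `D_j ⊆ D` nonempty,
`f_j ∈ k[[t_{d'} : d' ∉ D_j]]`, and `f_{d,j}` a unit of `k((t_d))`. -/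
theorem statement3 (k : Type*) [Field k] (D : Type*) [Fintype D] [Nonempty D]
    (h : LaurentMv D k) :
    ∃ (n : ℕ) (g : MvPowerSeries D k) (Dj : Fin n → Finset D)
      (fj : Fin n → MvPowerSeries D k) (fd : Fin n → D → LaurentMv D k),
      (∀ j, (Dj j).Nonempty) ∧
      (∀ j, OnlyVars ((↑(Dj j) : Set D)ᶜ) (fj j)) ∧
      (∀ j, ∀ d ∈ Dj j, IsLaurentUnitIn d (fd j d)) ∧
      h = algebraMap (MvPowerSeries D k) (LaurentMv D k) g
          + ∑ j : Fin n, algebraMap (MvPowerSeries D k) (LaurentMv D k) (fj j)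
              * ∏ d ∈ Dj j, fd j d := by
  classical
  obtain ⟨⟨f, s⟩, hs⟩ := IsLocalization.surj (M := Submonoid.powers (Pprod D k)) h
  obtain ⟨N, hN⟩ := s.2
  set φ := algebraMap (MvPowerSeries D k) (LaurentMv D k) with hφ
  have hP : IsUnit (φ (Pprod D k)) := IsLocalization.Away.algebraMap_isUnit _
  have hX : ∀ d : D, IsUnit (φ (MvPowerSeries.X d)) := fun d =>
    isUnit_of_dvd_unit (map_dvd φ (Finset.dvd_prod_of_mem _ (Finset.mem_univ d))) hP
  set v : D → LaurentMv D k := fun d => ((hX d).unit⁻¹ : (LaurentMv D k)ˣ) with hv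
  have hvX : ∀ d, φ (MvPowerSeries.X d) * v d = 1 := fun d => (hX d).mul_val_inv
  set e := (Fintype.equivFin (St3Aux.Idx D N)).symm with he
  refine ⟨Fintype.card (St3Aux.Idx D N), St3Aux.gP N f,
    fun j => St3Aux.Sj (e j),
    fun j => St3Aux.fS N f (e j),
    fun j d => φ (MvPowerSeries.X d) ^ (St3Aux.be (e j) d) * (v d) ^ N,
    fun j => St3Aux.Sj_nonempty (e j), ?_, ?_, ?_⟩
  · -- OnlyVars
    rintro j α ⟨d, hd, hαd⟩
    rw [Set.notMem_compl_iff, Finset.mem_coe] at hd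
    rw [St3Aux.coeff_fS, if_neg]
    intro hall
    exact hαd (hall d hd)
  · -- Laurent units
    intro j d _
    refine ⟨1, N, St3Aux.be (e j) d, ?_, ?_, ?_⟩
    · rintro α ⟨d', _, hαd'⟩
      rw [MvPowerSeries.coeff_one, if_neg]
      intro hα0
      exact hαd' (by rw [hα0]; rfl)
    · rw [map_one]; exact one_ne_zero
    · rw [mul_one, map_pow, map_pow, mul_left_comm, ← mul_pow, hvX d, one_pow, mul_one]
  · -- the main identity
    set U := φ (Pprod D k) ^ N with hU0
    have hU : IsUnit U := hP.pow N
    apply hU.mul_right_cancel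
    have hsU : φ s.1 = U := by rw [← hN, map_pow]
    have hL : h * U = φ f := by rw [← hsU]; exact hs
    have hPX : φ (Pprod D k) = ∏ d : D, φ (MvPowerSeries.X d) :=
      map_prod φ _ Finset.univ
    have hPprod : U = ∏ d : D, φ (MvPowerSeries.X d) ^ N := by
      rw [hU0, hPX, Finset.prod_pow]
    -- per index computation
    have hterm : ∀ i : St3Aux.Idx D N,
        (∏ d ∈ St3Aux.Sj i, φ (MvPowerSeries.X d) ^ (St3Aux.be i d) * (v d) ^ N) * U
          = φ ((MvPowerSeries.monomial (St3Aux.mj i)) 1) := by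
      intro i
      have hmon : (∏ d ∈ St3Aux.Sj i, (MvPowerSeries.X d : MvPowerSeries D k) ^ (St3Aux.be i d)) *
          ∏ d ∈ (St3Aux.Sj i)ᶜ, (MvPowerSeries.X d : MvPowerSeries D k) ^ N
          = (MvPowerSeries.monomial (St3Aux.mj i)) 1 := by
        rw [show (St3Aux.mj i)
            = St3Aux.toF (fun d => if d ∈ St3Aux.Sj i then St3Aux.be i d else N) from rfl,
          ← St3Aux.prod_X_pow, ← Finset.prod_mul_prod_compl (St3Aux.Sj i)]
        congr 1
        · exact Finset.prod_congr rfl fun d hd => by rw [if_pos hd]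
        · exact Finset.prod_congr rfl fun d hd => by rw [if_neg (Finset.mem_compl.mp hd)]
      rw [hPprod, ← Finset.prod_mul_prod_compl (St3Aux.Sj i) (fun d => φ (MvPowerSeries.X d) ^ N),
        ← mul_assoc, ← Finset.prod_mul_distrib]
      have hAB : ∀ d ∈ St3Aux.Sj i,
          (φ (MvPowerSeries.X d) ^ (St3Aux.be i d) * (v d) ^ N) * φ (MvPowerSeries.X d) ^ N
            = φ (MvPowerSeries.X d) ^ (St3Aux.be i d) := by
        intro d _
        rw [mul_assoc, ← mul_pow, mul_comm (v d), hvX d, one_pow, mul_one]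
      rw [Finset.prod_congr rfl hAB, ← hmon, map_mul, map_prod, map_prod]
      simp only [map_pow]
    have hUmon : φ ((MvPowerSeries.monomial (St3Aux.Nall D N)) 1) = U := by
      have h2 : Pprod D k ^ N = (MvPowerSeries.monomial (St3Aux.Nall D N)) 1 := by
        show (∏ d : D, (MvPowerSeries.X d : MvPowerSeries D k)) ^ N = _
        rw [← Finset.prod_pow]
        exact St3Aux.prod_X_pow (fun _ => N)
      rw [← h2, map_pow]
    rw [hL]
    conv_lhs => rw [St3Aux.key N f]
    rw [add_mul, Finset.sum_mul, map_add, map_mul, hUmon, map_sum]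
    congr 1
    rw [← Equiv.sum_comp e (fun i => φ (St3Aux.fS N f i * (MvPowerSeries.monomial (St3Aux.mj i)) 1))]
    apply Finset.sum_congr rfl
    intro j _
    rw [map_mul, ← hterm (e j)]
    exact (mul_assoc _ _ _).symm
end
end

section
/- Let Δ be an R-module such that: (i) for every x ∈ Δ and every d ∈ D there exists N ≥ 0 with t_d^N·x = 0; and (ii) Δ[t_•] := {x ∈ Δ : t_d·x = 0 for all d ∈ D} is a finite-dimensional k-vector space. Then the dual Δ* = Hom_k(Δ, k), regarded as an R-module via (a·ℓ)(x) = ℓ(a·x), is a finitely generated R-module. -/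
/-! With `𝔪 = (t_d)_d`, every `x ∈ Δ` is killed by a power of `𝔪`, so `Δ*` is `𝔪`-adically
Hausdorff. A functional vanishing on `{x | ∀ i, a_i • x = 0}` factors through
`x ↦ (a_i • x)_i`, hence lies in `(a_i)_i • Δ*`; applied to `a = t_•` this embeds `Δ*/𝔪Δ*` into
`Δ[t_•]*`, which is finite-dimensional. Since `R^r` is `𝔪`-adically complete, the
complete Nakayama lemma lifts finitely many generators of `Δ*/𝔪Δ*` to generators of `Δ*`. -/

noncomputable section

variable (k : Type*) [Field k] (D : Type*) [Fintype D]
variable (Δ : Type*) [AddCommGroup Δ] [Module k Δ] [Module (MvPowerSeries D k) Δ]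
variable [IsScalarTower k (MvPowerSeries D k) Δ]

/-- `Δ[t_•] = {x ∈ Δ : t_d·x = 0 for all d ∈ D}`, as a `k`-subspace of `Δ`. -/
def torsionAll : Submodule k Δ where
  carrier := {x | ∀ d : D, (MvPowerSeries.X d : MvPowerSeries D k) • x = 0}
  add_mem' := by
    intro a b ha hb d
    rw [smul_add, ha d, hb d, add_zero]
  zero_mem' := fun d => smul_zero _
  smul_mem' := by
    intro c x hx d
    rw [← algebraMap_smul (MvPowerSeries D k) c x, smul_smul, mul_comm, ← smul_smul,
      hx d, smul_zero]

/-- The `k[[t_•]]`-module structure on the `k`-linear dual of a `k[[t_•]]`-module `Δ`,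
given by `(a·ℓ)(x) = ℓ(a·x)`. -/
def dualModule : Module (MvPowerSeries D k) (Δ →ₗ[k] k) where
  smul a ℓ :=
    { toFun := fun x => ℓ (a • x)
      map_add' := fun x y => by
        show ℓ (a • (x + y)) = ℓ (a • x) + ℓ (a • y)
        rw [smul_add, map_add]
      map_smul' := fun c x => by
        show ℓ (a • (c • x)) = c • ℓ (a • x)
        rw [← algebraMap_smul (MvPowerSeries D k) c x, smul_smul, mul_comm, ← smul_smul,
          algebraMap_smul, map_smul] }
  one_smul ℓ := by ext x; show ℓ ((1 : MvPowerSeries D k) • x) = ℓ x; rw [one_smul]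
  mul_smul a b ℓ := by
    ext x
    show ℓ ((a * b) • x) = ℓ (b • (a • x))
    rw [← smul_smul, smul_comm]
  smul_zero a := by ext x; rfl
  smul_add a ℓ₁ ℓ₂ := by ext x; rfl
  add_smul a b ℓ := by
    ext x
    show ℓ ((a + b) • x) = ℓ (a • x) + ℓ (b • x)
    rw [add_smul, map_add]
  zero_smul ℓ := by
    ext x
    show ℓ ((0 : MvPowerSeries D k) • x) = 0
    rw [zero_smul, map_zero]

open MvPowerSeries

instance IsPrecomplete.pi {R : Type*} [CommRing R] {I : Ideal R} {ι : Type*} [Finite ι]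
    {M : ι → Type*} [∀ i, AddCommGroup (M i)] [∀ i, Module R (M i)]
    [∀ i, IsPrecomplete I (M i)] : IsPrecomplete I (∀ i, M i) where
  prec' f hf := by
    classical
    have := Fintype.ofFinite ι
    choose L hL using fun i => IsPrecomplete.prec (I := I) inferInstance (f := fun n => f n i)
      fun hmn => SModEq.sub_mem.mpr <| Submodule.smul_top_le_comap_smul_top _
        (LinearMap.proj (R := R) i) (SModEq.sub_mem.mp (hf hmn))
    refine ⟨L, fun n => SModEq.sub_mem.mpr ?_⟩
    rw [← Finset.univ_sum_single (f n - L)]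
    exact sum_mem fun i _ => Submodule.smul_top_le_comap_smul_top _
      (LinearMap.single R M i) (SModEq.sub_mem.mp (hL i n))

theorem LinearMap.exists_comp_eq_of_ker_le {K V W : Type*} [Field K] [AddCommGroup V]
    [Module K V] [AddCommGroup W] [Module K W] {f : V →ₗ[K] W} {ℓ : Module.Dual K V}
    (h : LinearMap.ker f ≤ LinearMap.ker ℓ) : ∃ φ : Module.Dual K W, φ ∘ₗ f = ℓ := by
  obtain ⟨φ, hφ⟩ : ℓ ∈ LinearMap.range f.dualMap := by
    rw [LinearMap.range_dualMap_eq_dualAnnihilator_ker, Submodule.mem_dualAnnihilator]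
    exact fun w hw => h hw
  exact ⟨φ, hφ⟩

theorem Ideal.exists_pow_span_range_le_torsionOf {A M : Type*} [CommRing A] [AddCommGroup M]
    [Module A M] {ι : Type*} [Finite ι] (a : ι → A) {x : M} (h : ∀ i, ∃ N : ℕ, a i ^ N • x = 0) :
    ∃ n, Ideal.span (Set.range a) ^ n ≤ Ideal.torsionOf A M x := by
  refine Ideal.exists_pow_le_of_le_radical_of_fg ?_ (Submodule.fg_span (Set.finite_range a))
  rw [Ideal.span_le]
  rintro _ ⟨i, rfl⟩
  obtain ⟨N, hN⟩ := h i
  exact ⟨N, (Ideal.mem_torsionOf_iff x _).mpr hN⟩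

attribute [local instance] dualModule

section

variable {K σ M : Type*} [Field K] [AddCommGroup M] [Module K M]
  [Module (MvPowerSeries σ K) M] [IsScalarTower K (MvPowerSeries σ K) M]

local notation "R" => MvPowerSeries σ K

@[simp]
theorem dualModule_smul_apply (a : R) (ℓ : M →ₗ[K] K) (x : M) : (a • ℓ) x = ℓ (a • x) := rfl

theorem mem_span_smul_top_of_forall_smul_eq_zero {ι : Type*} [Finite ι] (a : ι → R)
    {ℓ : M →ₗ[K] K} (hℓ : ∀ x : M, (∀ i, a i • x = 0) → ℓ x = 0) :
    ℓ ∈ Ideal.span (Set.range a) • (⊤ : Submodule R (M →ₗ[K] K)) := by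
  classical
  have := Fintype.ofFinite ι
  let F : M →ₗ[K] ι → M := LinearMap.pi fun i => DistribSMul.toLinearMap K M (a i)
  obtain ⟨φ, rfl⟩ := LinearMap.exists_comp_eq_of_ker_le (f := F) (ℓ := ℓ) fun x hx =>
    hℓ x fun i => congr_fun hx i
  have : φ ∘ₗ F = ∑ i, a i • (φ ∘ₗ LinearMap.single K (fun _ => M) i) := by
    ext x
    conv_lhs => rw [LinearMap.comp_apply, ← Finset.univ_sum_single (F x)]
    simp [F]
  rw [this]
  exact sum_mem fun i _ => Submodule.smul_mem_smul (Ideal.subset_span ⟨i, rfl⟩) trivial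

theorem apply_eq_zero_of_mem_smul_top {J : Ideal R} {ρ : M →ₗ[K] K}
    (hρ : ρ ∈ J • (⊤ : Submodule R (M →ₗ[K] K))) {x : M} (hx : J ≤ Ideal.torsionOf R M x) :
    ρ x = 0 := by
  refine Submodule.smul_induction_on hρ (fun a ha φ _ => ?_) fun φ ψ hφ hψ => ?_
  · rw [dualModule_smul_apply, (Ideal.mem_torsionOf_iff x a).mp (hx ha), map_zero]
  · rw [LinearMap.add_apply, hφ, hψ, add_zero]

theorem isHausdorff_dual {J : Ideal R} (h : ∀ x : M, ∃ n, J ^ n ≤ Ideal.torsionOf R M x) :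
    IsHausdorff J (M →ₗ[K] K) where
  haus' ρ hρ := by
    ext x
    obtain ⟨n, hn⟩ := h x
    exact apply_eq_zero_of_mem_smul_top (SModEq.zero.mp (hρ n)) hn

theorem exists_surjective_mkQ_comp_linearCombination [Finite σ]
    [FiniteDimensional K (torsionAll K σ M)] :
    ∃ (r : ℕ) (g : Fin r → M →ₗ[K] K), Function.Surjective
      ((Ideal.span (Set.range (X : σ → R)) • ⊤ : Submodule R (M →ₗ[K] K)).mkQ ∘ₗ
        Fintype.linearCombination R g) := by
  let b := Module.finBasis K (Module.Dual K (torsionAll K σ M))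
  choose g hg using fun i => LinearMap.exists_extend (b i)
  refine ⟨_, g, fun ℓ => ?_⟩
  obtain ⟨ℓ, rfl⟩ := Submodule.mkQ_surjective _ ℓ
  let a := b.repr (ℓ ∘ₗ (torsionAll K σ M).subtype)
  refine ⟨fun i => algebraMap K R (a i), (Submodule.Quotient.eq _).mpr ?_⟩
  refine sub_mem_comm_iff.mp <| mem_span_smul_top_of_forall_smul_eq_zero X fun x hx => ?_
  have hℓ := LinearMap.congr_fun (b.sum_repr (ℓ ∘ₗ (torsionAll K σ M).subtype)) ⟨x, hx⟩
  simp only [← hg, LinearMap.coe_sum, LinearMap.coe_smul, LinearMap.coe_comp,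
    Submodule.coe_subtype, Finset.sum_apply, Pi.smul_apply, Function.comp_apply, smul_eq_mul,
    Fintype.linearCombination_apply, LinearMap.sub_apply, dualModule_smul_apply,
    algebraMap_smul, map_smul, a] at hℓ ⊢
  rw [hℓ, sub_self]

end

theorem statement12
    (h1 : ∀ (x : Δ) (d : D), ∃ N : ℕ,
      ((MvPowerSeries.X d : MvPowerSeries D k) ^ N) • x = 0)
    (h2 : FiniteDimensional k (torsionAll k D Δ)) :
    @Module.Finite (MvPowerSeries D k) (Δ →ₗ[k] k) _ _ (dualModule k D Δ) := by
  obtain ⟨r, g, hg⟩ := exists_surjective_mkQ_comp_linearCombination (K := k) (σ := D) (M := Δ)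
  have := isHausdorff_dual fun x => Ideal.exists_pow_span_range_le_torsionOf X (h1 x)
  exact Module.Finite.of_surjective _ (surjective_of_mkQ_comp_surjective hg)
end
end

section
/- Let R be a commutative ring, t ∈ R, and M an R-module such that the set {x ∈ M : t·x = 0} is finite. Set M̲ = ∩_{n≥0} t^n·M. Then t·M̲ = M̲; i.e. multiplication by t is surjective on M̲. -/
/-!
Multiplication by `t` has finite fibres, each a coset of the `t`-torsion. Given `x ∈ M̲`, the sets
`{y ∈ tⁿM : t • y = x}` form a decreasing sequence of finite sets, nonempty because
`x ∈ tⁿ⁺¹M`. Such a sequence stabilises, so some `y` lies in all of them: `y ∈ M̲` and `t • y = x`.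
-/

theorem Set.nonempty_iInter_of_antitone_of_finite {α : Type*} {s : ℕ → Set α}
    (hs : Antitone s) (h0 : (s 0).Finite) (hne : ∀ n, (s n).Nonempty) :
    (⋂ n, s n).Nonempty := by
  let s' : ℕ → {u : Set α // u.Finite} := fun n => ⟨s n, h0.subset (hs n.zero_le)⟩
  obtain ⟨N, hN⟩ := WellFoundedLT.antitone_chain_condition (f := s') fun _ _ h => hs h
  obtain ⟨y, hy⟩ := hne N
  refine ⟨y, Set.mem_iInter.2 fun m => ?_⟩
  rcases le_total m N with h | h
  · exact hs h hy
  · rwa [← show s N = s m from congrArg Subtype.val (hN m h)]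

theorem AddMonoidHom.finite_preimage_singleton {G H : Type*} [AddGroup G] [AddGroup H]
    (f : G →+ H) (hf : (f ⁻¹' {0}).Finite) (x : H) : (f ⁻¹' {x}).Finite := by
  rcases (f ⁻¹' {x}).eq_empty_or_nonempty with h | ⟨y₀, hy₀⟩
  · simp [h]
  refine (hf.image (y₀ + ·)).subset fun y hy => ⟨-y₀ + y, ?_, add_neg_cancel_left y₀ y⟩
  simp_all

theorem Function.image_iInter_range_iterate {α : Type*} {f : α → α}
    (hf : ∀ x, (f ⁻¹' {x}).Finite) :
    f '' ⋂ n, Set.range f^[n] = ⋂ n, Set.range f^[n] := by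
  refine subset_antisymm ?_ fun x hx => ?_
  · rintro _ ⟨y, hy, rfl⟩
    refine Set.mem_iInter.2 fun n => ?_
    obtain ⟨z, rfl⟩ := Set.mem_iInter.1 hy n
    exact ⟨f z, (Function.Commute.self_iterate f n z).symm⟩
  let s : ℕ → Set α := fun n => f ⁻¹' {x} ∩ Set.range f^[n]
  have hs : Antitone s := fun m n h => Set.inter_subset_inter_right _ (by
    rw [← Nat.add_sub_cancel' h, Function.iterate_add]
    exact Set.range_comp_subset_range _ _)
  have hne : ∀ n, (s n).Nonempty := fun n => by
    obtain ⟨z, rfl⟩ := Set.mem_iInter.1 hx (n + 1)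
    exact ⟨f^[n] z, (Function.iterate_succ_apply' f n z).symm, z, rfl⟩
  obtain ⟨y, hy⟩ := Set.nonempty_iInter_of_antitone_of_finite hs
    ((hf x).subset Set.inter_subset_left) hne
  rw [Set.mem_iInter] at hy
  exact ⟨y, Set.mem_iInter.2 fun n => (hy n).2, (hy 0).1⟩

/-- **Statement 13** (Claim in the final Remark of the paper).  Let `R` be a commutative
ring, `t ∈ R` and `M` an `R`-module whose `t`-torsion `{x : t·x = 0}` is a finite set.
Then multiplication by `t` is surjective on `M̲ = ⋂_{n ≥ 0} t^n·M`, i.e.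
`t·M̲ = M̲`. -/
theorem statement13 (R : Type*) [CommRing R] (t : R)
    (M : Type*) [AddCommGroup M] [Module R M]
    (hfin : {x : M | t • x = 0}.Finite) :
    Submodule.map (LinearMap.lsmul R M t)
        (⨅ n : ℕ, LinearMap.range (LinearMap.lsmul R M (t ^ n)))
      = ⨅ n : ℕ, LinearMap.range (LinearMap.lsmul R M (t ^ n)) := by
  have hfibre : ∀ x : M, ((t • ·) ⁻¹' {x}).Finite :=
    (DistribSMul.toAddMonoidHom M t).finite_preimage_singleton hfin
  apply SetLike.coe_injective
  have hcoe : ∀ s : R, ⇑(LinearMap.lsmul R M s) = (s • ·) := fun _ => rfl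
  simpa only [Submodule.map_coe, Submodule.coe_iInf, LinearMap.coe_range, hcoe, ← smul_iterate]
    using Function.image_iInter_range_iterate hfibre
end
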